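/- Let W = (w_{ij}) be a symmetric array of nonnegative real weights (w_{ij} ≥ 0 for all i, j, including diagonals) on a vertex set V, and for a finite subset S define w(S) = Σ_{i,j∈S, i<j} w_{ij} + Σ_{i∈S} w_{ii}. Let S be a finite subset with |S| ≥ 2 and let v ∈ S minimize Σ_{j∈S} w_{vj} over vertices in S. Then w(S∖{v}) ≥ ((|S| − 2)/|S|)·w(S). -/

import Mathlib

/-!
Double counting gives `2 w(S) = ∑_{i,j ∈ S} w i j + ∑_{i ∈ S} w i i`, and removing `v` loses
exactly its degree `d(v) = ∑_{j ∈ S} w v j`. A vertex of minimum degree has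
`|S| d(v) ≤ ∑_{u ∈ S} d(u) ≤ 2 w(S)`, so `w(S ∖ {v}) = w(S) - d(v) ≥ (1 - 2/|S|) w(S)`.
-/

/-- The total weight w(S) of the subgraph induced by S: each (non-self) edge {i,j},
i < j, counted once, plus each self-edge counted once. -/
def inducedWeight {V : Type*} [LinearOrder V] (w : V → V → ℝ) (S : Finset V) : ℝ :=
  ∑ p ∈ (S ×ˢ S).filter (fun p => p.1 < p.2), w p.1 p.2 + ∑ i ∈ S, w i i

section

variable {V : Type*} [LinearOrder V] {w : V → V → ℝ}

lemma two_mul_inducedWeight (hsymm : ∀ i j, w i j = w j i) (S : Finset V) :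
    2 * inducedWeight w S = ∑ i ∈ S, ∑ j ∈ S, w i j + ∑ i ∈ S, w i i := by
  have hsplit : ∀ i j, w i j =
      (if i < j then w i j else 0) + (if j < i then w j i else 0) + (if i = j then w i j else 0) := by
    intro i j
    rcases lt_trichotomy i j with h | rfl | h
    · simp [h, h.not_gt, h.ne]
    · simp
    · simp [h, h.not_gt, h.ne', hsymm i j]
  have hlower : ∑ i ∈ S, ∑ j ∈ S, (if j < i then w j i else 0) =
      ∑ i ∈ S, ∑ j ∈ S, (if i < j then w i j else 0) := Finset.sum_comm
  have hdiag : ∑ i ∈ S, ∑ j ∈ S, (if i = j then w i j else 0) = ∑ i ∈ S, w i i := by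
    simp
  have hdouble : ∑ i ∈ S, ∑ j ∈ S, w i j =
      ∑ i ∈ S, ∑ j ∈ S, (if i < j then w i j else 0) +
        ∑ i ∈ S, ∑ j ∈ S, (if j < i then w j i else 0) +
        ∑ i ∈ S, ∑ j ∈ S, (if i = j then w i j else 0) := by
    simp only [← Finset.sum_add_distrib]
    exact Finset.sum_congr rfl fun i _ => Finset.sum_congr rfl fun j _ => hsplit i j
  rw [inducedWeight, Finset.sum_filter, Finset.sum_product, hdouble, hlower, hdiag]
  ring

lemma inducedWeight_erase (hsymm : ∀ i j, w i j = w j i) {S : Finset V} {v : V} (hv : v ∈ S) :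
    inducedWeight w (S.erase v) = inducedWeight w S - ∑ j ∈ S, w v j := by
  have hrow : ∀ i, ∑ j ∈ S, w i j = w i v + ∑ j ∈ S.erase v, w i j :=
    fun i => (Finset.add_sum_erase S (w i) hv).symm
  have hcol : ∑ i ∈ S.erase v, w i v = ∑ j ∈ S, w v j - w v v := by
    rw [Finset.sum_congr rfl fun i _ => hsymm i v, hrow v]; ring
  have hS := two_mul_inducedWeight hsymm S
  have hT := two_mul_inducedWeight hsymm (S.erase v)
  rw [← Finset.add_sum_erase S _ hv, ← Finset.add_sum_erase S (fun i => w i i) hv,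
    Finset.sum_congr rfl fun i _ => hrow i, Finset.sum_add_distrib, hcol] at hS
  linarith

lemma card_mul_le_two_mul_inducedWeight (hsymm : ∀ i j, w i j = w j i)
    (hdiag : ∀ i, 0 ≤ w i i) {S : Finset V} {c : ℝ} (hc : ∀ u ∈ S, c ≤ ∑ j ∈ S, w u j) :
    S.card * c ≤ 2 * inducedWeight w S := by
  have hsum : S.card * c ≤ ∑ u ∈ S, ∑ j ∈ S, w u j := by
    simpa using Finset.card_nsmul_le_sum S _ c hc
  have : 0 ≤ ∑ i ∈ S, w i i := Finset.sum_nonneg fun i _ => hdiag i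
  linarith [two_mul_inducedWeight hsymm S]

end

theorem stmt_14_general {V : Type*} [LinearOrder V] (w : V → V → ℝ)
    (hsymm : ∀ i j, w i j = w j i) (hnonneg : ∀ i j, 0 ≤ w i j)
    (S : Finset V)
    (v : V) (hv : v ∈ S) (hmin : ∀ u ∈ S, ∑ j ∈ S, w v j ≤ ∑ j ∈ S, w u j) :
    inducedWeight w (S.erase v)
      ≥ (((S.card : ℝ) - 2) / (S.card : ℝ)) * inducedWeight w S := by
  have hcard : (0 : ℝ) < S.card := by exact_mod_cast Finset.card_pos.mpr ⟨v, hv⟩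
  have hkey := card_mul_le_two_mul_inducedWeight hsymm (fun i => hnonneg i i) hmin
  rw [ge_iff_le, inducedWeight_erase hsymm hv, div_mul_eq_mul_div, div_le_iff₀ hcard]
  linear_combination hkey

/-- For a symmetric nonnegative weight array w, a finite S with |S| ≥ 2 and
v ∈ S minimizing Σ_{j∈S} w_{vj}, one has w(S∖{v}) ≥ ((|S| − 2)/|S|)·w(S). -/
theorem stmt_14 {V : Type*} [LinearOrder V] (w : V → V → ℝ)
    (hsymm : ∀ i j, w i j = w j i) (hnonneg : ∀ i j, 0 ≤ w i j)
    (S : Finset V) (hS : 2 ≤ S.card)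
    (v : V) (hv : v ∈ S) (hmin : ∀ u ∈ S, ∑ j ∈ S, w v j ≤ ∑ j ∈ S, w u j) :
    inducedWeight w (S.erase v)
      ≥ (((S.card : ℝ) - 2) / (S.card : ℝ)) * inducedWeight w S :=
  stmt_14_general w hsymm hnonneg S v hv hmin
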